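/- Let a < b be real numbers, let f be continuous on [a,b], and let w ∈ C²([a,b]) satisfy w > 0 on [a,b] and w″ = f on [a,b]. Then for every convex function v ∈ C²([a,b]) with v(a) = v(b) = 0 one has ∫_a^b f v dx + w(b) v′(b) − w(a) v′(a) ≥ (min_{[a,b]} w) · (v′(b) − v′(a)). -/

import Mathlib

open Set MeasureTheory

/-!
Lagrange's identity `(w' v - w v')' = w'' v - w v''` integrates, with `w'' = f` and
`v(a) = v(b) = 0`, to `∫ f v + w(b) v'(b) - w(a) v'(a) = ∫ w v''`. Convexity of `v` gives
`v'' ≥ 0`, so `∫ w v'' ≥ (min w) ∫ v'' = (min w) (v'(b) - v'(a))`.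
-/

section Field

variable {𝕜 F : Type*} [NontriviallyNormedField 𝕜] [NormedAddCommGroup F] [NormedSpace 𝕜 F]

theorem iteratedDerivWithin_two (f : 𝕜 → F) (s : Set 𝕜) :
    iteratedDerivWithin 2 f s = derivWithin (derivWithin f s) s :=
  funext fun _ ↦ iteratedDerivWithin_eq_iterate

theorem ContDiffOn.hasDerivWithinAt_derivWithin {f : 𝕜 → F} {s : Set 𝕜} (hs : UniqueDiffOn 𝕜 s)
    (hf : ContDiffOn 𝕜 2 f s) {x : 𝕜} (hx : x ∈ s) :
    HasDerivWithinAt (derivWithin f s) (iteratedDerivWithin 2 f s x) s x := by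
  rw [iteratedDerivWithin_two]
  exact ((hf.derivWithin hs (m := 1) (by norm_num)).differentiableOn one_ne_zero x hx)
    |>.hasDerivWithinAt

end Field

theorem ConvexOn.iteratedDerivWithin_two_nonneg {s : Set ℝ} {v : ℝ → ℝ} (hvcvx : ConvexOn ℝ s v)
    (hv : DifferentiableOn ℝ v s) (x : ℝ) : 0 ≤ iteratedDerivWithin 2 v s x := by
  rw [iteratedDerivWithin_two]
  exact (hvcvx.monotoneOn_derivWithin hv).derivWithin_nonneg

section Icc

variable {a b : ℝ} {u v : ℝ → ℝ}

theorem integral_iteratedDerivWithin_two_Icc (hab : a < b) (hv : ContDiffOn ℝ 2 v (Icc a b)) :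
    ∫ x in a..b, iteratedDerivWithin 2 v (Icc a b) x =
      derivWithin v (Icc a b) b - derivWithin v (Icc a b) a := by
  rw [iteratedDerivWithin_two]
  exact intervalIntegral.integral_derivWithin_Icc_of_contDiffOn_Icc
    (hv.derivWithin (uniqueDiffOn_Icc hab) (by norm_num)) hab.le

theorem integral_iteratedDerivWithin_two_mul_Icc (hab : a < b)
    (hu : ContDiffOn ℝ 2 u (Icc a b)) (hv : ContDiffOn ℝ 2 v (Icc a b)) :
    ∫ x in a..b, iteratedDerivWithin 2 u (Icc a b) x * v x =
      (∫ x in a..b, u x * iteratedDerivWithin 2 v (Icc a b) x) +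
        (derivWithin u (Icc a b) b * v b - u b * derivWithin v (Icc a b) b) -
        (derivWithin u (Icc a b) a * v a - u a * derivWithin v (Icc a b) a) := by
  set s := Icc a b
  have hs : UniqueDiffOn ℝ s := uniqueDiffOn_Icc hab
  have hu'' := hu.continuousOn_iteratedDerivWithin (m := 2) le_rfl hs
  have hv'' := hv.continuousOn_iteratedDerivWithin (m := 2) le_rfl hs
  have hu' := (hu.derivWithin hs (m := 1) (by norm_num)).continuousOn
  have hv' := (hv.derivWithin hs (m := 1) (by norm_num)).continuousOn
  have hderiv : ∀ x ∈ Ioo a b, HasDerivAt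
      (fun x ↦ derivWithin u s x * v x - u x * derivWithin v s x)
      (iteratedDerivWithin 2 u s x * v x - u x * iteratedDerivWithin 2 v s x) x := by
    intro x hx
    have hxs : x ∈ s := Ioo_subset_Icc_self hx
    have := ((hu.hasDerivWithinAt_derivWithin hs hxs).mul
      ((hv.differentiableOn two_ne_zero x hxs).hasDerivWithinAt)).sub
      (((hu.differentiableOn two_ne_zero x hxs).hasDerivWithinAt).mul
        (hv.hasDerivWithinAt_derivWithin hs hxs))
    exact (this.hasDerivAt (Icc_mem_nhds hx.1 hx.2)).congr_deriv (by ring)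
  have hint₁ : IntervalIntegrable (fun x ↦ iteratedDerivWithin 2 u s x * v x) volume a b :=
    (hu''.mul hv.continuousOn).intervalIntegrable_of_Icc hab.le
  have hint₂ : IntervalIntegrable (fun x ↦ u x * iteratedDerivWithin 2 v s x) volume a b :=
    (hu.continuousOn.mul hv'').intervalIntegrable_of_Icc hab.le
  have hftc := intervalIntegral.integral_eq_sub_of_hasDerivAt_of_le hab.le
    (f := fun x ↦ derivWithin u s x * v x - u x * derivWithin v s x)
    ((hu'.mul hv.continuousOn).sub (hu.continuousOn.mul hv')) hderiv (hint₁.sub hint₂)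
  rw [intervalIntegral.integral_sub hint₁ hint₂] at hftc
  linarith

theorem ConvexOn.sInf_image_mul_le_integral_mul_iteratedDerivWithin_two (hab : a < b)
    {w : ℝ → ℝ} (hw : ContinuousOn w (Icc a b)) (hv : ContDiffOn ℝ 2 v (Icc a b))
    (hvcvx : ConvexOn ℝ (Icc a b) v) :
    sInf (w '' Icc a b) * (derivWithin v (Icc a b) b - derivWithin v (Icc a b) a) ≤
      ∫ x in a..b, w x * iteratedDerivWithin 2 v (Icc a b) x := by
  have hv'' := hv.continuousOn_iteratedDerivWithin (m := 2) le_rfl (uniqueDiffOn_Icc hab)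
  have hbdd : BddBelow (w '' Icc a b) := (isCompact_Icc.image_of_continuousOn hw).bddBelow
  rw [← integral_iteratedDerivWithin_two_Icc hab hv, ← intervalIntegral.integral_const_mul]
  refine intervalIntegral.integral_mono_on hab.le
    ((hv''.intervalIntegrable_of_Icc hab.le).const_mul _)
    ((hw.mul hv'').intervalIntegrable_of_Icc hab.le) fun x hx ↦ ?_
  exact mul_le_mul_of_nonneg_right (csInf_le hbdd (mem_image_of_mem w hx))
    (hvcvx.iteratedDerivWithin_two_nonneg (hv.differentiableOn two_ne_zero) x)

end Icc

theorem one_dim_properness_inequality_general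
    (a b : ℝ) (hab : a < b)
    (f : ℝ → ℝ)
    (w : ℝ → ℝ) (hw : ContDiffOn ℝ 2 w (Icc a b))
    (hwf : ∀ x ∈ Icc a b, iteratedDerivWithin 2 w (Icc a b) x = f x)
    (v : ℝ → ℝ) (hv : ContDiffOn ℝ 2 v (Icc a b))
    (hvcvx : ConvexOn ℝ (Icc a b) v)
    (hva : v a = 0) (hvb : v b = 0) :
    (∫ x in a..b, f x * v x) + w b * derivWithin v (Icc a b) b -
        w a * derivWithin v (Icc a b) a ≥
      sInf (w '' Icc a b) *
        (derivWithin v (Icc a b) b - derivWithin v (Icc a b) a) := by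
  have hfw : ∫ x in a..b, f x * v x = ∫ x in a..b, iteratedDerivWithin 2 w (Icc a b) x * v x :=
    intervalIntegral.integral_congr fun x hx ↦ by
      rw [hwf x (uIcc_of_le hab.le ▸ hx)]
  have hlagrange := integral_iteratedDerivWithin_two_mul_Icc hab hw hv
  rw [hva, hvb] at hlagrange
  have hbound :=
    hvcvx.sInf_image_mul_le_integral_mul_iteratedDerivWithin_two hab hw.continuousOn hv
  linarith

/-- The key inequality in the forward direction of the one-dimensional
properness result: if `w > 0` solves `w'' = f` on `[a,b]`, then for every convex
`C²` function `v` vanishing at the endpoints,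
`∫_a^b f v + w(b) v'(b) − w(a) v'(a) ≥ (min_{[a,b]} w) (v'(b) − v'(a))`. -/
theorem one_dim_properness_inequality
    (a b : ℝ) (hab : a < b)
    (f : ℝ → ℝ) (hf : ContinuousOn f (Icc a b))
    (w : ℝ → ℝ) (hw : ContDiffOn ℝ 2 w (Icc a b))
    (hwpos : ∀ x ∈ Icc a b, 0 < w x)
    (hwf : ∀ x ∈ Icc a b, iteratedDerivWithin 2 w (Icc a b) x = f x)
    (v : ℝ → ℝ) (hv : ContDiffOn ℝ 2 v (Icc a b))
    (hvcvx : ConvexOn ℝ (Icc a b) v)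
    (hva : v a = 0) (hvb : v b = 0) :
    (∫ x in a..b, f x * v x) + w b * derivWithin v (Icc a b) b -
        w a * derivWithin v (Icc a b) a ≥
      sInf (w '' Icc a b) *
        (derivWithin v (Icc a b) b - derivWithin v (Icc a b) a) :=
  one_dim_properness_inequality_general a b hab f w hw hwf v hv hvcvx hva hvb
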